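/- Let (μ_t)_{t∈ℝ} be a Hopf deformation of a Hopf algebra B with deformed antipodes S_t. Then Δ∘S_{t+r} = (S_t⊗S_r)∘τ∘Δ for all t,r ∈ ℝ. -/
import Mathlib


open TensorProduct Coalgebra

variable {B : Type} [Ring B] [HopfAlgebra ℂ B]

/-- The comultiplication `Λ = (id ⊗ τ ⊗ id) ∘ (Δ ⊗ Δ)` of `B ⊗ B`. -/
noncomputable def Lam : B ⊗[ℂ] B →ₗ[ℂ] (B ⊗[ℂ] B) ⊗[ℂ] (B ⊗[ℂ] B) :=
  (TensorProduct.tensorTensorTensorComm ℂ B B B B).toLinearMap ∘ₗ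
    TensorProduct.map (comul (R := ℂ)) (comul (R := ℂ))

/-- The map `b ↦ δ(b)·1 : B → B`. -/
noncomputable def unitCounit : B →ₗ[ℂ] B :=
  Algebra.linearMap ℂ B ∘ₗ counit (R := ℂ)

noncomputable def MM (m₁ m₂ : B ⊗[ℂ] B →ₗ[ℂ] B) :
    (B ⊗[ℂ] B) ⊗[ℂ] (B ⊗[ℂ] B) →ₗ[ℂ] B ⊗[ℂ] B :=
  TensorProduct.map m₁ m₂ ∘ₗ (TensorProduct.tensorTensorTensorComm ℂ B B B B).toLinearMap

@[simp] lemma MM_tmul (m₁ m₂ : B ⊗[ℂ] B →ₗ[ℂ] B) (a b c d : B) :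
    MM m₁ m₂ ((a ⊗ₜ[ℂ] b) ⊗ₜ[ℂ] (c ⊗ₜ[ℂ] d)) = m₁ (a ⊗ₜ[ℂ] c) ⊗ₜ[ℂ] m₂ (b ⊗ₜ[ℂ] d) := by
  simp [MM]

noncomputable def convAux (m₁ m₂ : B ⊗[ℂ] B →ₗ[ℂ] B) (f g : B →ₗ[ℂ] B ⊗[ℂ] B) :
    B →ₗ[ℂ] B ⊗[ℂ] B :=
  MM m₁ m₂ ∘ₗ TensorProduct.map f g ∘ₗ comul

noncomputable def eAux : B →ₗ[ℂ] B ⊗[ℂ] B :=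
  LinearMap.toSpanSingleton ℂ (B ⊗[ℂ] B) ((1 : B) ⊗ₜ[ℂ] (1 : B)) ∘ₗ counit

lemma comul_unitCounit : (comul (R := ℂ) (A := B)) ∘ₗ unitCounit = eAux := by
  ext b
  simp [unitCounit, eAux, Algebra.algebraMap_eq_smul_one, Algebra.TensorProduct.one_def]

lemma conv_left_inv (m₁ m₂ m : B ⊗[ℂ] B →ₗ[ℂ] B) (S' : B →ₗ[ℂ] B)
    (hc : (comul (R := ℂ) (A := B)) ∘ₗ m = TensorProduct.map m₁ m₂ ∘ₗ Lam)
    (hs : m ∘ₗ TensorProduct.map S' LinearMap.id ∘ₗ comul = unitCounit) :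
    convAux m₁ m₂ (comul ∘ₗ S') comul = eAux := by
  have hmap : TensorProduct.map ((comul (R := ℂ) (A := B)) ∘ₗ S') (comul (R := ℂ) (A := B))
      = TensorProduct.map comul comul ∘ₗ TensorProduct.map S' LinearMap.id := by
    ext x y; simp
  have hMMΛ : MM m₁ m₂ ∘ₗ TensorProduct.map (comul (R := ℂ) (A := B)) comul
      = TensorProduct.map m₁ m₂ ∘ₗ Lam := by
    rw [MM, Lam, LinearMap.comp_assoc]
  rw [convAux, hmap]
  simp only [← LinearMap.comp_assoc]
  rw [hMMΛ, ← hc]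
  simp only [LinearMap.comp_assoc]
  rw [hs, comul_unitCounit]

lemma convAux_one_right (m₁ m₂ : B ⊗[ℂ] B →ₗ[ℂ] B)
    (h₁ : ∀ a : B, m₁ (a ⊗ₜ[ℂ] 1) = a) (h₂ : ∀ a : B, m₂ (a ⊗ₜ[ℂ] 1) = a)
    (f : B →ₗ[ℂ] B ⊗[ℂ] B) : convAux m₁ m₂ f eAux = f := by
  have key : ∀ x : B ⊗[ℂ] B, MM m₁ m₂ (x ⊗ₜ[ℂ] ((1 : B) ⊗ₜ[ℂ] (1 : B))) = x := by
    intro x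
    induction x using TensorProduct.induction_on with
    | zero => simp
    | tmul a b => simp [h₁, h₂]
    | add x y hx hy =>
        rw [add_tmul, map_add, hx, hy]
  have hsplit : TensorProduct.map f (eAux (B := B)) =
      TensorProduct.map f (LinearMap.toSpanSingleton ℂ (B ⊗[ℂ] B) ((1 : B) ⊗ₜ[ℂ] (1 : B)))
        ∘ₗ (counit (R := ℂ) (A := B)).lTensor B := by
    rw [eAux]
    rw [show (counit (R := ℂ) (A := B)).lTensor B
        = TensorProduct.map LinearMap.id (counit (R := ℂ) (A := B)) from rfl,
      ← TensorProduct.map_comp, LinearMap.comp_id]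
  rw [convAux, hsplit, LinearMap.comp_assoc,
    show (counit (R := ℂ) (A := B)).lTensor B ∘ₗ comul = (TensorProduct.mk ℂ B ℂ).flip 1 from
      Coalgebra.lTensor_counit_comp_comul]
  ext b
  simp [key]


lemma convAux_one_left (m₁ m₂ : B ⊗[ℂ] B →ₗ[ℂ] B)
    (h₁ : ∀ a : B, m₁ ((1 : B) ⊗ₜ[ℂ] a) = a) (h₂ : ∀ a : B, m₂ ((1 : B) ⊗ₜ[ℂ] a) = a)
    (g : B →ₗ[ℂ] B ⊗[ℂ] B) : convAux m₁ m₂ eAux g = g := by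
  have key : ∀ x : B ⊗[ℂ] B, MM m₁ m₂ (((1 : B) ⊗ₜ[ℂ] (1 : B)) ⊗ₜ[ℂ] x) = x := by
    intro x
    induction x using TensorProduct.induction_on with
    | zero => simp
    | tmul a b => simp [h₁, h₂]
    | add x y hx hy =>
        rw [tmul_add, map_add, hx, hy]
  have hsplit : TensorProduct.map (eAux (B := B)) g =
      TensorProduct.map (LinearMap.toSpanSingleton ℂ (B ⊗[ℂ] B) ((1 : B) ⊗ₜ[ℂ] (1 : B))) g
        ∘ₗ (counit (R := ℂ) (A := B)).rTensor B := by
    rw [eAux]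
    rw [show (counit (R := ℂ) (A := B)).rTensor B
        = TensorProduct.map (counit (R := ℂ) (A := B)) LinearMap.id from rfl,
      ← TensorProduct.map_comp, LinearMap.comp_id]
  rw [convAux, hsplit, LinearMap.comp_assoc,
    show (counit (R := ℂ) (A := B)).rTensor B ∘ₗ comul = TensorProduct.mk ℂ ℂ B 1 from
      Coalgebra.rTensor_counit_comp_comul]
  ext b
  simp [key]

lemma convAux_assoc (m₁ m₂ : B ⊗[ℂ] B →ₗ[ℂ] B)
    (h₁ : ∀ a b c : B, m₁ (m₁ (a ⊗ₜ[ℂ] b) ⊗ₜ[ℂ] c) = m₁ (a ⊗ₜ[ℂ] m₁ (b ⊗ₜ[ℂ] c)))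
    (h₂ : ∀ a b c : B, m₂ (m₂ (a ⊗ₜ[ℂ] b) ⊗ₜ[ℂ] c) = m₂ (a ⊗ₜ[ℂ] m₂ (b ⊗ₜ[ℂ] c)))
    (f g h : B →ₗ[ℂ] B ⊗[ℂ] B) :
    convAux m₁ m₂ (convAux m₁ m₂ f g) h = convAux m₁ m₂ f (convAux m₁ m₂ g h) := by
  have hMM3 : ∀ x y z : B ⊗[ℂ] B,
      MM m₁ m₂ (MM m₁ m₂ (x ⊗ₜ[ℂ] y) ⊗ₜ[ℂ] z) = MM m₁ m₂ (x ⊗ₜ[ℂ] MM m₁ m₂ (y ⊗ₜ[ℂ] z)) := by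
    intro x y z
    induction x using TensorProduct.induction_on with
    | zero => simp
    | add x x' hx hx' => simp only [add_tmul, map_add, hx, hx']
    | tmul a b =>
      induction y using TensorProduct.induction_on with
      | zero => simp
      | add y y' hy hy' => simp only [add_tmul, tmul_add, map_add, hy, hy']
      | tmul c d =>
        induction z using TensorProduct.induction_on with
        | zero => simp
        | add z z' hz hz' => simp only [add_tmul, tmul_add, map_add, hz, hz']
        | tmul e f' => simp [h₁, h₂]
  have hdecompL : TensorProduct.map (MM m₁ m₂ ∘ₗ TensorProduct.map f g ∘ₗ comul) h
      = (MM m₁ m₂).rTensor (B ⊗[ℂ] B) ∘ₗ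
        TensorProduct.map (TensorProduct.map f g) h ∘ₗ (comul (R := ℂ) (A := B)).rTensor B := by
    ext x y; simp
  have hdecompR : TensorProduct.map f (MM m₁ m₂ ∘ₗ TensorProduct.map g h ∘ₗ comul)
      = (MM m₁ m₂).lTensor (B ⊗[ℂ] B) ∘ₗ
        TensorProduct.map f (TensorProduct.map g h) ∘ₗ (comul (R := ℂ) (A := B)).lTensor B := by
    ext x y; simp
  have key : ((MM m₁ m₂ ∘ₗ (MM m₁ m₂).lTensor (B ⊗[ℂ] B)) ∘ₗ
        TensorProduct.map f (TensorProduct.map g h)) ∘ₗ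
        (TensorProduct.assoc ℂ B B B).toLinearMap
      = (MM m₁ m₂ ∘ₗ (MM m₁ m₂).rTensor (B ⊗[ℂ] B)) ∘ₗ
        TensorProduct.map (TensorProduct.map f g) h := by
    ext a b c
    simp [hMM3]
  rw [convAux, convAux, convAux, convAux, hdecompL, hdecompR]
  simp only [LinearMap.comp_assoc]
  rw [(Coalgebra.coassoc (R := ℂ) (A := B)).symm]
  simp only [← LinearMap.comp_assoc]
  rw [key]

/-- The helper map `a ⊗ (m ⊗ e) ↦ m₁(a ⊗ S₁ e) ⊗ m`. -/
noncomputable def KK (m₁ : B ⊗[ℂ] B →ₗ[ℂ] B) (S₁ : B →ₗ[ℂ] B) :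
    B ⊗[ℂ] (B ⊗[ℂ] B) →ₗ[ℂ] B ⊗[ℂ] B :=
  m₁.rTensor B ∘ₗ (TensorProduct.assoc ℂ B B B).symm.toLinearMap ∘ₗ
    LinearMap.lTensor B (S₁.rTensor B ∘ₗ (TensorProduct.comm ℂ B B).toLinearMap)

@[simp] lemma KK_tmul (m₁ : B ⊗[ℂ] B →ₗ[ℂ] B) (S₁ : B →ₗ[ℂ] B) (a m e : B) :
    KK m₁ S₁ (a ⊗ₜ[ℂ] (m ⊗ₜ[ℂ] e)) = m₁ (a ⊗ₜ[ℂ] S₁ e) ⊗ₜ[ℂ] m := by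
  simp [KK]

lemma conv_right_inv (m₁ m₂ : B ⊗[ℂ] B →ₗ[ℂ] B) (S₁ S₂ : B →ₗ[ℂ] B)
    (hs₁ : m₁ ∘ₗ TensorProduct.map LinearMap.id S₁ ∘ₗ comul = unitCounit)
    (hs₂ : m₂ ∘ₗ TensorProduct.map LinearMap.id S₂ ∘ₗ comul = unitCounit) :
    convAux m₁ m₂ comul
      (TensorProduct.map S₁ S₂ ∘ₗ (TensorProduct.comm ℂ B B).toLinearMap ∘ₗ comul) = eAux := by
  set τ := (TensorProduct.comm ℂ B B).toLinearMap
  set g : B →ₗ[ℂ] B ⊗[ℂ] B := TensorProduct.map S₁ S₂ ∘ₗ τ ∘ₗ comul with hg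
  set Δ := comul (R := ℂ) (A := B) with hΔ
  have h1 : TensorProduct.map Δ g = g.lTensor (B ⊗[ℂ] B) ∘ₗ Δ.rTensor B := by
    simp
  have h2 : Δ.rTensor B ∘ₗ Δ
      = (TensorProduct.assoc ℂ B B B).symm.toLinearMap ∘ₗ Δ.lTensor B ∘ₗ Δ := by
    rw [LinearEquiv.eq_toLinearMap_symm_comp]
    exact Coalgebra.coassoc
  have h3 : g.lTensor (B ⊗[ℂ] B)
      = (TensorProduct.map S₁ S₂ ∘ₗ τ).lTensor (B ⊗[ℂ] B) ∘ₗ Δ.lTensor (B ⊗[ℂ] B) := by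
    rw [hg, ← LinearMap.lTensor_comp, LinearMap.comp_assoc]
  have h4 : Δ.lTensor (B ⊗[ℂ] B) ∘ₗ (TensorProduct.assoc ℂ B B B).symm.toLinearMap
      = (TensorProduct.assoc ℂ B B (B ⊗[ℂ] B)).symm.toLinearMap ∘ₗ
          LinearMap.lTensor B (Δ.lTensor B) := by
    ext a c e; simp [hΔ]
  have h4s : Δ.lTensor (B ⊗[ℂ] B) ∘ₗ (TensorProduct.assoc ℂ B B B).symm.toLinearMap ∘ₗ
        Δ.lTensor B ∘ₗ Δ
      = (TensorProduct.assoc ℂ B B (B ⊗[ℂ] B)).symm.toLinearMap ∘ₗ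
          LinearMap.lTensor B (Δ.lTensor B) ∘ₗ Δ.lTensor B ∘ₗ Δ := by
    simpa only [LinearMap.comp_assoc] using
      congrArg (fun X => X ∘ₗ (Δ.lTensor B ∘ₗ Δ)) h4
  have h5 : LinearMap.lTensor B (Δ.lTensor B) ∘ₗ Δ.lTensor B
      = LinearMap.lTensor B (TensorProduct.assoc ℂ B B B).toLinearMap ∘ₗ
          LinearMap.lTensor B (Δ.rTensor B) ∘ₗ Δ.lTensor B := by
    simp only [← LinearMap.lTensor_comp]
    rw [← Coalgebra.coassoc]
  have h5s : LinearMap.lTensor B (Δ.lTensor B) ∘ₗ Δ.lTensor B ∘ₗ Δ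
      = LinearMap.lTensor B (TensorProduct.assoc ℂ B B B).toLinearMap ∘ₗ
          LinearMap.lTensor B (Δ.rTensor B) ∘ₗ Δ.lTensor B ∘ₗ Δ := by
    simpa only [LinearMap.comp_assoc] using congrArg (fun X => X ∘ₗ Δ) h5
  have h6 : MM m₁ m₂ ∘ₗ (TensorProduct.map S₁ S₂ ∘ₗ τ).lTensor (B ⊗[ℂ] B) ∘ₗ
        (TensorProduct.assoc ℂ B B (B ⊗[ℂ] B)).symm.toLinearMap ∘ₗ
        LinearMap.lTensor B (TensorProduct.assoc ℂ B B B).toLinearMap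
      = KK m₁ S₁ ∘ₗ LinearMap.lTensor B ((m₂ ∘ₗ TensorProduct.map LinearMap.id S₂).rTensor B) := by
    ext a c d e
    simp [τ]
  have h6s : MM m₁ m₂ ∘ₗ (TensorProduct.map S₁ S₂ ∘ₗ τ).lTensor (B ⊗[ℂ] B) ∘ₗ
        (TensorProduct.assoc ℂ B B (B ⊗[ℂ] B)).symm.toLinearMap ∘ₗ
        LinearMap.lTensor B (TensorProduct.assoc ℂ B B B).toLinearMap ∘ₗ
        LinearMap.lTensor B (Δ.rTensor B) ∘ₗ Δ.lTensor B ∘ₗ Δ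
      = KK m₁ S₁ ∘ₗ LinearMap.lTensor B ((m₂ ∘ₗ TensorProduct.map LinearMap.id S₂).rTensor B) ∘ₗ
          LinearMap.lTensor B (Δ.rTensor B) ∘ₗ Δ.lTensor B ∘ₗ Δ := by
    simpa only [LinearMap.comp_assoc] using
      congrArg (fun X => X ∘ₗ (LinearMap.lTensor B (Δ.rTensor B) ∘ₗ Δ.lTensor B ∘ₗ Δ)) h6
  have h7 : LinearMap.lTensor B ((m₂ ∘ₗ TensorProduct.map LinearMap.id S₂).rTensor B) ∘ₗ
        LinearMap.lTensor B (Δ.rTensor B)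
      = LinearMap.lTensor B ((unitCounit (B := B)).rTensor B) := by
    rw [← LinearMap.lTensor_comp, ← LinearMap.rTensor_comp, LinearMap.comp_assoc, hΔ, hs₂]
  have h7s : LinearMap.lTensor B ((m₂ ∘ₗ TensorProduct.map LinearMap.id S₂).rTensor B) ∘ₗ
        LinearMap.lTensor B (Δ.rTensor B) ∘ₗ Δ.lTensor B ∘ₗ Δ
      = LinearMap.lTensor B ((unitCounit (B := B)).rTensor B) ∘ₗ Δ.lTensor B ∘ₗ Δ := by
    simpa only [LinearMap.comp_assoc] using congrArg (fun X => X ∘ₗ (Δ.lTensor B ∘ₗ Δ)) h7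
  have h8 : (unitCounit (B := B)).rTensor B ∘ₗ Δ = (TensorProduct.mk ℂ B B) 1 := by
    rw [unitCounit, LinearMap.rTensor_comp, LinearMap.comp_assoc, hΔ,
      Coalgebra.rTensor_counit_comp_comul]
    ext b
    simp [Algebra.algebraMap_eq_smul_one]
  have h8s : LinearMap.lTensor B ((unitCounit (B := B)).rTensor B) ∘ₗ Δ.lTensor B ∘ₗ Δ
      = LinearMap.lTensor B ((TensorProduct.mk ℂ B B) 1) ∘ₗ Δ := by
    rw [← LinearMap.comp_assoc, ← LinearMap.lTensor_comp, h8]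
  have h9 : KK m₁ S₁ ∘ₗ LinearMap.lTensor B ((TensorProduct.mk ℂ B B) 1)
      = (TensorProduct.mk ℂ B B).flip 1 ∘ₗ m₁ ∘ₗ TensorProduct.map LinearMap.id S₁ := by
    ext a e; simp
  have h10 : (TensorProduct.mk ℂ B B).flip 1 ∘ₗ unitCounit (B := B) = eAux := by
    ext b
    simp [unitCounit, eAux, Algebra.algebraMap_eq_smul_one, smul_tmul']
  rw [convAux, ← hΔ, h1]
  simp only [LinearMap.comp_assoc]
  rw [h2, h3]
  simp only [LinearMap.comp_assoc]
  have h9s : KK m₁ S₁ ∘ₗ LinearMap.lTensor B ((TensorProduct.mk ℂ B B) 1) ∘ₗ Δ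
      = (TensorProduct.mk ℂ B B).flip 1 ∘ₗ m₁ ∘ₗ TensorProduct.map LinearMap.id S₁ ∘ₗ Δ := by
    simpa only [LinearMap.comp_assoc] using congrArg (fun X => X ∘ₗ Δ) h9
  rw [h4s, h5s, h6s, h7s, h8s, h9s, hs₁, h10]


/-- Let `(μ_t)_{t∈ℝ}` be a Hopf deformation of the Hopf algebra `B` with deformed
antipodes `S_t`, i.e. `μ_t ∘ (S_t ⊗ id) ∘ Δ = μ_t ∘ (id ⊗ S_t) ∘ Δ = δ(·)1`.  Then
`Δ ∘ S_{t+r} = (S_t ⊗ S_r) ∘ τ ∘ Δ` for all `t, r ∈ ℝ`. -/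
theorem stmt11 (μt : ℝ → (B ⊗[ℂ] B →ₗ[ℂ] B))
    (hzero : μt 0 = LinearMap.mul' ℂ B)
    (hassoc : ∀ (t : ℝ) (a b c : B),
      μt t (μt t (a ⊗ₜ[ℂ] b) ⊗ₜ[ℂ] c) = μt t (a ⊗ₜ[ℂ] μt t (b ⊗ₜ[ℂ] c)))
    (hone : ∀ (t : ℝ) (a : B), μt t ((1 : B) ⊗ₜ[ℂ] a) = a ∧ μt t (a ⊗ₜ[ℂ] (1 : B)) = a)
    (hcompat : ∀ t s : ℝ,
      comul (R := ℂ) ∘ₗ μt (t + s) = TensorProduct.map (μt t) (μt s) ∘ₗ Lam)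
    (hcont : ∀ x : B ⊗[ℂ] B, Continuous fun t : ℝ => counit (R := ℂ) (μt t x))
    (S : ℝ → (B →ₗ[ℂ] B))
    (hS : ∀ t : ℝ,
      μt t ∘ₗ TensorProduct.map (S t) LinearMap.id ∘ₗ comul (R := ℂ) = unitCounit ∧
      μt t ∘ₗ TensorProduct.map LinearMap.id (S t) ∘ₗ comul (R := ℂ) = unitCounit) :
    ∀ t r : ℝ,
      comul (R := ℂ) ∘ₗ S (t + r)
        = TensorProduct.map (S t) (S r) ∘ₗ (TensorProduct.comm ℂ B B).toLinearMap ∘ₗ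
            comul (R := ℂ) := by
  intro t r
  set g : B →ₗ[ℂ] B ⊗[ℂ] B :=
    TensorProduct.map (S t) (S r) ∘ₗ (TensorProduct.comm ℂ B B).toLinearMap ∘ₗ comul with hg
  have hL : convAux (μt t) (μt r) (comul ∘ₗ S (t + r)) comul = eAux :=
    conv_left_inv (μt t) (μt r) (μt (t + r)) (S (t + r)) (hcompat t r) ((hS (t + r)).1)
  have hR : convAux (μt t) (μt r) comul g = eAux :=
    conv_right_inv (μt t) (μt r) (S t) (S r) ((hS t).2) ((hS r).2)
  calc comul (R := ℂ) ∘ₗ S (t + r)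
      = convAux (μt t) (μt r) (comul ∘ₗ S (t + r)) eAux :=
        (convAux_one_right (μt t) (μt r) (fun a => (hone t a).2) (fun a => (hone r a).2) _).symm
    _ = convAux (μt t) (μt r) (comul ∘ₗ S (t + r)) (convAux (μt t) (μt r) comul g) := by
        rw [hR]
    _ = convAux (μt t) (μt r) (convAux (μt t) (μt r) (comul ∘ₗ S (t + r)) comul) g :=
        (convAux_assoc (μt t) (μt r) (hassoc t) (hassoc r) _ _ _).symm
    _ = convAux (μt t) (μt r) eAux g := by rw [hL]
    _ = g := convAux_one_left (μt t) (μt r) (fun a => (hone t a).1) (fun a => (hone r a).1) _
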